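/- arXiv:1709.05450 — 7 statements merged into one kernel-verified Lean document; each statement's English description precedes it below -/
import Mathlib

section
/- For positive definite matrices B, C and a real number s ≠ 1, if A = B #_s C then B = C #_{1/(1-s)} A. -/
/-!
The weighted geometric mean is symmetric, `B #_s C = C #_{1-s} B`, and iterates multiplicatively
in the weight, `C #_u (C #_t B) = C #_{tu} B`. Hence `A = C #_{1-s} B`, and
`C #_{1/(1-s)} A = C #_1 B = B`. Symmetry comes from writing `B^{-1/2} C B^{-1/2} = N Nᴴ` with
`N = B^{-1/2} C^{1/2}`: then `Nᴴ N = (C^{-1/2} B C^{-1/2})⁻¹`, and any function of `N Nᴴ`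
intertwines through `N` with the same function of `Nᴴ N`.
-/

open Matrix ComplexOrder

noncomputable def mlog {n : Type*} [Fintype n] [DecidableEq n] (A : Matrix n n ℂ) : Matrix n n ℂ :=
  cfc Real.log A

noncomputable def mpow {n : Type*} [Fintype n] [DecidableEq n] (A : Matrix n n ℂ) (p : ℝ) :
    Matrix n n ℂ :=
  cfc (fun x : ℝ => x ^ p) A

noncomputable def rtr {n : Type*} [Fintype n] [DecidableEq n] (A : Matrix n n ℂ) : ℝ :=
  A.trace.re

/-- The weighted geometric mean `A #_t B = A^{1/2} (A^{-1/2} B A^{-1/2})^t A^{1/2}`,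
defined for all real `t`. -/
noncomputable def gm {n : Type*} [Fintype n] [DecidableEq n] (A B : Matrix n n ℂ) (t : ℝ) :
    Matrix n n ℂ :=
  mpow A (1 / 2) * mpow (mpow A (-(1 / 2)) * B * mpow A (-(1 / 2))) t * mpow A (1 / 2)

open scoped MatrixOrder
open CFC

theorem mul_mul_cancel_left_of_mul_eq_one {R : Type*} [Monoid R] {a b : R} (h : a * b = 1)
    (x : R) : a * (b * x) = x := by
  rw [← mul_assoc, h, one_mul]

theorem Polynomial.aeval_mul_eq_mul_aeval {R A : Type*} [CommSemiring R] [Semiring A]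
    [Algebra R A] {M N P : A} (h : M * N = N * P) (p : Polynomial R) :
    aeval M p * N = N * aeval P p := by
  have hpow (k : ℕ) : M ^ k * N = N * P ^ k := (SemiconjBy.pow_right h.symm k).symm
  induction p using Polynomial.induction_on' with
  | add p q hp hq => simp only [map_add, add_mul, mul_add, hp, hq]
  | monomial k c =>
    rw [aeval_monomial, aeval_monomial, mul_assoc, hpow, ← mul_assoc, Algebra.commutes, mul_assoc]

namespace CFC

variable {A : Type*} [PartialOrder A] [Ring A] [StarRing A] [TopologicalSpace A]
  [StarOrderedRing A] [Algebra ℝ A] [ContinuousFunctionalCalculus ℝ A IsSelfAdjoint]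
  [NonnegSpectrumClass ℝ A]

theorem rpow_rpow' [IsSemitopologicalRing A] [T2Space A] {a : A} (ha : IsStrictlyPositive a)
    (x y : ℝ) : (a ^ x) ^ y = a ^ (x * y) := by
  rcases eq_or_ne x 0 with rfl | hx
  · rw [rpow_zero a, one_rpow, zero_mul, rpow_zero a]
  · exact rpow_rpow a x y hx

theorem conj_rpow_neg_half_rpow_neg_one {a b : A} (ha : IsStrictlyPositive a)
    (hb : IsStrictlyPositive b) :
    (b ^ (-(1 / 2) : ℝ) * a * b ^ (-(1 / 2) : ℝ)) ^ (-1 : ℝ) =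
      b ^ (1 / 2 : ℝ) * a ^ (-1 : ℝ) * b ^ (1 / 2 : ℝ) := by
  have hZ : IsStrictlyPositive (b ^ (-(1 / 2) : ℝ) * a * b ^ (-(1 / 2) : ℝ)) := by cfc_tac
  refine left_inv_eq_right_inv (a := b ^ (-(1 / 2) : ℝ) * a * b ^ (-(1 / 2) : ℝ)) ?_ ?_
  · simpa only [rpow_one _ hZ.nonneg] using rpow_neg_mul_rpow 1 hZ
  · have haa : a * a ^ (-1 : ℝ) = 1 := by
      simpa only [rpow_one a ha.nonneg] using rpow_mul_rpow_neg 1 ha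
    simp only [mul_assoc, mul_mul_cancel_left_of_mul_eq_one (rpow_neg_mul_rpow _ hb),
      mul_mul_cancel_left_of_mul_eq_one haa, rpow_neg_mul_rpow _ hb]

end CFC

namespace Matrix

variable {n 𝕜 : Type*} [Fintype n] [DecidableEq n] [RCLike 𝕜]

theorem cfc_mul_eq_mul_cfc {M N P : Matrix n n 𝕜} (hM : IsSelfAdjoint M) (hP : IsSelfAdjoint P)
    (h : M * N = N * P) (f : ℝ → ℝ) : cfc f M * N = N * cfc f P := by
  have hfin : (spectrum ℝ M ∪ spectrum ℝ P).Finite :=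
    finite_real_spectrum.union finite_real_spectrum
  set p := Lagrange.interpolate hfin.toFinset id f
  have hp : ∀ x ∈ spectrum ℝ M ∪ spectrum ℝ P, p.eval x = f x := fun x hx =>
    Lagrange.eval_interpolate_at_node f (Set.injOn_id _) (hfin.mem_toFinset.mpr hx)
  have hM' : cfc f M = Polynomial.aeval M p := by
    rw [← cfc_polynomial p M]
    exact cfc_congr fun x hx => (hp x (.inl hx)).symm
  have hP' : cfc f P = Polynomial.aeval P p := by
    rw [← cfc_polynomial p P]
    exact cfc_congr fun x hx => (hp x (.inr hx)).symm
  rw [hM', hP']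
  exact Polynomial.aeval_mul_eq_mul_aeval h p

theorem rpow_mul_eq_mul_rpow {M N P : Matrix n n 𝕜} (hM : 0 ≤ M) (hP : 0 ≤ P)
    (h : M * N = N * P) (t : ℝ) : M ^ t * N = N * P ^ t := by
  rw [rpow_eq_cfc_real hM, rpow_eq_cfc_real hP]
  exact cfc_mul_eq_mul_cfc hM.isSelfAdjoint hP.isSelfAdjoint h _

end Matrix

section GeometricMean

variable {n : Type*} [Fintype n] [DecidableEq n]

theorem mpow_eq_rpow {M : Matrix n n ℂ} (hM : 0 ≤ M) (p : ℝ) : mpow M p = M ^ p :=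
  (rpow_eq_cfc_real hM).symm

theorem gm_eq_rpow {A B : Matrix n n ℂ} (hA : A.PosDef) (hB : B.PosDef) (t : ℝ) :
    gm A B t =
      A ^ (1 / 2 : ℝ) * (A ^ (-(1 / 2) : ℝ) * B * A ^ (-(1 / 2) : ℝ)) ^ t *
        A ^ (1 / 2 : ℝ) := by
  have hX : IsStrictlyPositive (A ^ (-(1 / 2) : ℝ) * B * A ^ (-(1 / 2) : ℝ)) := by cfc_tac
  simp only [gm, mpow_eq_rpow hA.posSemidef.nonneg, mpow_eq_rpow hX.nonneg]

theorem gm_posDef {A B : Matrix n n ℂ} (hA : A.PosDef) (hB : B.PosDef) (t : ℝ) :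
    (gm A B t).PosDef := by
  rw [gm_eq_rpow hA hB]
  exact isStrictlyPositive_iff_posDef.mp (by cfc_tac)

theorem gm_one {A B : Matrix n n ℂ} (hA : A.PosDef) (hB : B.PosDef) : gm A B 1 = B := by
  have hA' := hA.isStrictlyPositive
  rw [gm_eq_rpow hA hB, rpow_one _ (by cfc_tac)]
  simp only [mul_assoc, mul_mul_cancel_left_of_mul_eq_one (rpow_mul_rpow_neg _ hA'),
    rpow_neg_mul_rpow _ hA', mul_one]

theorem gm_gm {A B : Matrix n n ℂ} (hA : A.PosDef) (hB : B.PosDef) (t u : ℝ) :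
    gm A (gm A B t) u = gm A B (t * u) := by
  have hX : IsStrictlyPositive (A ^ (-(1 / 2) : ℝ) * B * A ^ (-(1 / 2) : ℝ)) := by cfc_tac
  rw [gm_eq_rpow hA (gm_posDef hA hB t), gm_eq_rpow hA hB, gm_eq_rpow hA hB, ← rpow_rpow' hX]
  congr 2
  have hA' := hA.isStrictlyPositive
  simp only [mul_assoc, mul_mul_cancel_left_of_mul_eq_one (rpow_neg_mul_rpow _ hA'),
    rpow_mul_rpow_neg _ hA', mul_one]

theorem gm_comm {A B : Matrix n n ℂ} (hA : A.PosDef) (hB : B.PosDef) (t : ℝ) :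
    gm A B t = gm B A (1 - t) := by
  have hA' := hA.isStrictlyPositive
  have hB' := hB.isStrictlyPositive
  have hZinv := conj_rpow_neg_half_rpow_neg_one hA' hB'
  have haa : A ^ (1 / 2 : ℝ) * A ^ (1 / 2 : ℝ) = A := by
    rw [← sqrt_eq_rpow, sqrt_mul_sqrt_self A]
  have hbb : B ^ (1 / 2 : ℝ) * B ^ (1 / 2 : ℝ) = B := by
    rw [← sqrt_eq_rpow, sqrt_mul_sqrt_self B]
  rw [gm_eq_rpow hA hB, gm_eq_rpow hB hA]
  set a := A ^ (1 / 2 : ℝ)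
  set a' := A ^ (-(1 / 2) : ℝ)
  set b := B ^ (1 / 2 : ℝ)
  set b' := B ^ (-(1 / 2) : ℝ)
  set X := a' * B * a'
  set Z := b' * A * b'
  have hZ : IsStrictlyPositive Z := by cfc_tac
  have ha'a' : a' * a' = A ^ (-1 : ℝ) := by rw [← rpow_add hA'.isUnit]; norm_num
  have ha'a : a' * a = 1 := rpow_neg_mul_rpow _ hA'
  have haa' : a * a' = 1 := rpow_mul_rpow_neg _ hA'
  have hb'b : b' * b = 1 := rpow_neg_mul_rpow _ hB'
  have hbb' : b * b' = 1 := rpow_mul_rpow_neg _ hB'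
  -- `X = N Nᴴ` and `Z⁻¹ = Nᴴ N` for `N = a' * b`
  have hXN : X ^ t * (a' * b) = a' * b * Z ^ (-t) := by
    rw [neg_eq_neg_one_mul, ← rpow_rpow' hZ]
    refine rpow_mul_eq_mul_rpow (by cfc_tac) (by cfc_tac) ?_ t
    simp only [X, hZinv, ← ha'a', ← hbb, mul_assoc]
  calc a * X ^ t * a = a * (X ^ t * (a' * b)) * (b' * A) := by
        simp only [mul_assoc, ← haa, mul_mul_cancel_left_of_mul_eq_one hbb',
          mul_mul_cancel_left_of_mul_eq_one ha'a]
    _ = b * (Z ^ (-t) * Z) * b := by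
        rw [hXN]
        simp only [Z, mul_assoc, mul_mul_cancel_left_of_mul_eq_one haa', hb'b, mul_one]
    _ = b * Z ^ (1 - t) * b := by
        rw [sub_eq_neg_add, rpow_add hZ.isUnit, rpow_one Z hZ.nonneg]

end GeometricMean

theorem stmt8 {n : Type*} [Fintype n] [DecidableEq n]
    (A B C : Matrix n n ℂ) (hB : B.PosDef) (hC : C.PosDef) (s : ℝ) (hs : s ≠ 1)
    (hA : A = gm B C s) :
    B = gm C A (1 / (1 - s)) := by
  rw [hA, gm_comm hB hC, gm_gm hC hB, mul_one_div_cancel (sub_ne_zero.mpr hs.symm), gm_one hC hB]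
end

section
/- For all positive definite n×n matrices X, Y and all real t₀, t₁, t: X #_{(1-t)t₀ + t t₁} Y = (X #_{t₀} Y) #_t (X #_{t₁} Y). -/
open Matrix ComplexOrder

/-!
The identity holds for strictly positive elements of any algebra with a continuous functional
calculus; matrices enter only through `mpow = CFC.rpow`. The key is congruence covariance: for
invertible `m` and strictly positive `d`, `(m m⋆) #_t (m d m⋆) = m d^t m⋆`, because
`v = (m m⋆)^{-1/2} m` is unitary and real powers commute with unitary conjugation.
With `c = a^{-1/2} b a^{-1/2}` and `m = a^{1/2} c^{t₀/2}` one has `a #_s b = m c^{s-t₀} m⋆`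
for every `s`, so `a #_{t₀} b = m m⋆` and `a #_{t₁} b = m c^{t₁-t₀} m⋆`, whose mean at `t` is
`m c^{t(t₁-t₀)} m⋆ = a #_{(1-t)t₀ + t t₁} b`.
-/

namespace CFC

variable {A : Type*} [PartialOrder A] [Ring A] [StarRing A] [TopologicalSpace A]
  [StarOrderedRing A] [Algebra ℝ A] [ContinuousFunctionalCalculus ℝ A IsSelfAdjoint]
  [NonnegSpectrumClass ℝ A]

lemma star_rpow (a : A) (p : ℝ) : star (a ^ p) = a ^ p :=
  rpow_nonneg.isSelfAdjoint.star_eq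

lemma _root_.IsStrictlyPositive.rpow_conjugate {a b : A} (ha : IsStrictlyPositive a)
    (hb : IsStrictlyPositive b) (p : ℝ) : IsStrictlyPositive (a ^ p * b * a ^ p) :=
  hb.conjugate_of_isUnit_of_isSelfAdjoint _ _ (IsStrictlyPositive.rpow a p ha).isUnit
    rpow_nonneg.isSelfAdjoint

noncomputable def geomMean (a b : A) (t : ℝ) : A :=
  a ^ (1 / 2 : ℝ) * (a ^ (-(1 / 2) : ℝ) * b * a ^ (-(1 / 2) : ℝ)) ^ t * a ^ (1 / 2 : ℝ)

lemma _root_.IsStrictlyPositive.geomMean {a b : A} (ha : IsStrictlyPositive a)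
    (hb : IsStrictlyPositive b) (t : ℝ) : IsStrictlyPositive (geomMean a b t) :=
  ha.rpow_conjugate (IsStrictlyPositive.rpow _ t (ha.rpow_conjugate hb _)) _

variable [IsTopologicalRing A] [T2Space A]

lemma unitary_conjugate_rpow {a u : A} (ha : IsStrictlyPositive a) (hu : u ∈ unitary A)
    (p : ℝ) : (u * a * star u) ^ p = u * a ^ p * star u := by
  have h0 : (0 : NNReal) ∉ spectrum NNReal a := spectrum.zero_notMem _ ha.isUnit
  have := StarAlgHomClass.map_cfc (S := ℝ) (Unitary.conjStarAlgAut ℝ A ⟨u, hu⟩)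
    (fun x : NNReal => x ^ p) a
    (fun x hx => (NNReal.continuousAt_rpow_const
      (Or.inl (ne_of_mem_of_not_mem hx h0))).continuousWithinAt)
    (by change Continuous fun x : A => u * x * star u; fun_prop)
  simpa [rpow_def] using this.symm

lemma rpow_rpow_of_isStrictlyPositive {a : A} (ha : IsStrictlyPositive a) (x y : ℝ) :
    (a ^ x) ^ y = a ^ (x * y) := by
  rcases eq_or_ne x 0 with rfl | hx
  · simp [rpow_zero a ha.nonneg]
  · exact rpow_rpow a x y hx ha

lemma geomMean_mul_star {m d : A} (hm : IsUnit m) (hd : IsStrictlyPositive d) (t : ℝ) :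
    geomMean (m * star m) (m * d * star m) t = m * d ^ t * star m := by
  set a := m * star m
  have ha : IsStrictlyPositive a := by
    simpa [a] using hm.isStrictlyPositive_star_right_conjugate_iff.mpr isStrictlyPositive_one
  set v := a ^ (-(1 / 2) : ℝ) * m
  have hv_star : star v = star m * a ^ (-(1 / 2) : ℝ) := by simp [v, star_rpow]
  have hv_mul_star : v * star v = 1 :=
    calc v * star v = a ^ (-(1 / 2) : ℝ) * a ^ (1 : ℝ) * a ^ (-(1 / 2) : ℝ) := by
          rw [hv_star, rpow_one a ha.nonneg]; simp only [v, a, mul_assoc]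
      _ = a ^ (-(1 / 2) + 1 + -(1 / 2) : ℝ) := by rw [rpow_add ha.isUnit, rpow_add ha.isUnit]
      _ = 1 := by norm_num [rpow_zero a ha.nonneg]
  have hv : v ∈ unitary A := by
    have hv_unit : IsUnit v := (IsStrictlyPositive.rpow a _ ha).isUnit.mul hm
    refine Unitary.mem_iff.mpr ⟨hv_unit.mul_left_cancel ?_, hv_mul_star⟩
    rw [← mul_assoc, hv_mul_star, one_mul, mul_one]
  have h_left : a ^ (1 / 2 : ℝ) * v = m := by
    rw [← mul_assoc, rpow_mul_rpow_neg _ ha, one_mul]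
  have h_right : star v * a ^ (1 / 2 : ℝ) = star m := by
    rw [hv_star, mul_assoc, rpow_neg_mul_rpow _ ha, mul_one]
  have h_inner : a ^ (-(1 / 2) : ℝ) * (m * d * star m) * a ^ (-(1 / 2) : ℝ) = v * d * star v := by
    simp only [hv_star, v, mul_assoc]
  rw [geomMean, h_inner, unitary_conjugate_rpow hd hv t]
  simp only [← mul_assoc, h_left]
  simp only [mul_assoc, h_right]

theorem geomMean_geomMean {a b : A} (ha : IsStrictlyPositive a) (hb : IsStrictlyPositive b)
    (t₀ t₁ t : ℝ) :
    geomMean a b ((1 - t) * t₀ + t * t₁) = geomMean (geomMean a b t₀) (geomMean a b t₁) t := by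
  set c := a ^ (-(1 / 2) : ℝ) * b * a ^ (-(1 / 2) : ℝ)
  have hc : IsStrictlyPositive c := ha.rpow_conjugate hb _
  set m := a ^ (1 / 2 : ℝ) * c ^ (t₀ / 2)
  have hm : IsUnit m :=
    (IsStrictlyPositive.rpow a _ ha).isUnit.mul (IsStrictlyPositive.rpow c _ hc).isUnit
  have h_mean (s : ℝ) : geomMean a b s = m * c ^ (s - t₀) * star m := by
    have h_split : c ^ s = c ^ (t₀ / 2) * c ^ (s - t₀) * c ^ (t₀ / 2) := by
      rw [← rpow_add hc.isUnit, ← rpow_add hc.isUnit]; ring_nf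
    calc geomMean a b s = a ^ (1 / 2 : ℝ) * c ^ s * a ^ (1 / 2 : ℝ) := rfl
      _ = m * c ^ (s - t₀) * star m := by
        simp only [h_split, m, star_mul, star_rpow, mul_assoc]
  rw [h_mean, h_mean t₀, h_mean t₁, sub_self, rpow_zero c hc.nonneg, mul_one,
    geomMean_mul_star hm (IsStrictlyPositive.rpow c _ hc), rpow_rpow_of_isStrictlyPositive hc]
  congr 3
  ring

end CFC

open scoped MatrixOrder

lemma mpow_eq_rpow_s9 {n : Type*} [Fintype n] [DecidableEq n] {A : Matrix n n ℂ}
    (hA : A.PosSemidef) (p : ℝ) : mpow A p = A ^ p :=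
  (CFC.rpow_eq_cfc_real hA.nonneg).symm

lemma gm_eq_geomMean {n : Type*} [Fintype n] [DecidableEq n] {A B : Matrix n n ℂ}
    (hA : A.PosSemidef) (hB : B.PosSemidef) (t : ℝ) : gm A B t = CFC.geomMean A B t := by
  have h_inner : (A ^ (-(1 / 2) : ℝ) * B * A ^ (-(1 / 2) : ℝ)).PosSemidef :=
    (conjugate_nonneg_of_nonneg hB.nonneg CFC.rpow_nonneg).posSemidef
  rw [gm, mpow_eq_rpow_s9 hA, mpow_eq_rpow_s9 hA, mpow_eq_rpow_s9 h_inner, CFC.geomMean]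

theorem stmt9 {n : Type*} [Fintype n] [DecidableEq n]
    (X Y : Matrix n n ℂ) (hX : X.PosDef) (hY : Y.PosDef) (t₀ t₁ t : ℝ) :
    gm X Y ((1 - t) * t₀ + t * t₁) = gm (gm X Y t₀) (gm X Y t₁) t := by
  have h_gm (s : ℝ) : gm X Y s = CFC.geomMean X Y s := gm_eq_geomMean hX.posSemidef hY.posSemidef s
  have h_psd (s : ℝ) : (gm X Y s).PosSemidef := by
    rw [h_gm]; exact (hX.isStrictlyPositive.geomMean hY.isStrictlyPositive s).nonneg.posSemidef
  rw [gm_eq_geomMean (h_psd t₀) (h_psd t₁), h_gm, h_gm, h_gm]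
  exact CFC.geomMean_geomMean hX.isStrictlyPositive hY.isStrictlyPositive t₀ t₁ t
end

section
/- Let R(X‖Y) be a function on P_n × P_n that is convex and lower semicontinuous in X and satisfies the scaling relation R(λX‖Y) = λ R(X‖Y) + λ log λ · Tr[X] + (1-λ) Tr[Y] for all λ > 0. Define Φ_R(H,Y) = sup{Tr[XH] − R(X‖Y) : X positive definite, Tr[X] = 1} and Ψ_R(H,Y) = sup{Tr[XH] − R(X‖Y) : X positive definite}. Then Ψ_R(H,Y) = exp(Φ_R(H,Y) + Tr[Y] − 1) − Tr[Y]. -/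
open Matrix ComplexOrder
open scoped ENNReal

/-!
Every positive definite `X` is uniquely `l • X₀` with `l = Tr X > 0` and `Tr X₀ = 1`, and the
scaling relation turns the objective into
`Tr[(l X₀) H] - R(l X₀‖Y) = l (a - log l) - Tr Y` with `a = Tr[X₀ H] - R(X₀‖Y) + Tr Y`.
Since `l (a - log l) ≤ exp (a - 1)` (this is `1 + t ≤ eᵗ` at `t = a - 1 - log l`) with equality
at `l = exp (a - 1)`, optimizing over `l` first gives `Ψ = sup_{X₀} exp (a(X₀) - 1) - Tr Y`,
and the monotone continuous map `x ↦ exp (x + Tr Y - 1) - Tr Y` commutes with the supremum.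
-/

open Set

namespace EReal

lemma continuous_add_coe (c : ℝ) : Continuous fun x : EReal => x + c :=
  continuous_iff_continuousAt.2 fun x =>
    (continuousAt_add (p := (x, (c : EReal))) (Or.inr (coe_ne_bot c))
      (Or.inr (coe_ne_top c))).comp (f := fun y => (y, (c : EReal))) (by fun_prop)

/-- Nonemptiness is needed: `x ↦ exp (x + c - 1) - c` sends `⊥` to `-c`, not to `⊥`. -/
lemma iSup_coe_exp_add_sub {ι : Sort*} [Nonempty ι] (g : ι → ℝ) (c : ℝ) :
    ⨆ i, ((Real.exp (g i + c - 1) - c : ℝ) : EReal) =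
      (exp ((⨆ i, (g i : EReal)) + c - 1) : ℝ≥0∞) - (c : EReal) := by
  set F : EReal → EReal := fun x => (exp (x + c - 1) : ℝ≥0∞) - (c : EReal)
  have hF : ∀ x : ℝ, F x = ((Real.exp (x + c - 1) - c : ℝ) : EReal) := fun x => by
    simp only [F, ← coe_one, ← coe_add, ← coe_sub, exp_coe, coe_ennreal_ofReal,
      max_eq_left (Real.exp_pos _).le]
  have hmono : Monotone F := fun x y hxy =>
    sub_le_sub (coe_ennreal_le_coe_ennreal_iff.2
      (exp_monotone (sub_le_sub (add_le_add_left hxy _) le_rfl))) le_rfl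
  have hcont : Continuous F := by
    simp only [F, sub_eq_add_neg, ← coe_neg, ← coe_one]
    exact continuous_add_coe _ |>.comp <| continuous_coe_ennreal_ereal.comp <|
      ENNReal.continuous_exp.comp <| continuous_add_coe _ |>.comp <| continuous_add_coe _
  simp only [← hF]
  exact (hmono.map_ciSup_of_continuousAt hcont.continuousAt).symm

end EReal

lemma Real.mul_sub_mul_log_le_exp {l : ℝ} (hl : 0 < l) (a : ℝ) :
    l * a - l * Real.log l ≤ Real.exp (a - 1) :=
  calc l * a - l * Real.log l = l * (a - Real.log l - 1 + 1) := by ring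
    _ ≤ l * Real.exp (a - Real.log l - 1) :=
        mul_le_mul_of_nonneg_left (Real.add_one_le_exp _) hl.le
    _ = Real.exp (a - 1) := by
        rw [sub_sub, add_comm (Real.log l), ← sub_sub, Real.exp_sub, Real.exp_log hl,
          mul_div_cancel₀ _ hl.ne']

lemma Real.iSup_mul_sub_mul_log_sub (a c : ℝ) :
    ⨆ l : Ioi (0 : ℝ), ((l * a - l * Real.log l - c : ℝ) : EReal) =
      ((Real.exp (a - 1) - c : ℝ) : EReal) := by
  refine le_antisymm (iSup_le fun l => ?_) (le_iSup_of_le ⟨_, Real.exp_pos (a - 1)⟩ ?_)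
  · exact EReal.coe_le_coe_iff.2 (by linarith [Real.mul_sub_mul_log_le_exp l.2 a])
  · rw [Real.log_exp]; exact EReal.coe_le_coe_iff.2 (le_of_eq (by ring))

section Matrix

variable {n : Type*} [Fintype n]

lemma Matrix.PosDef.exists_smul_trace_eq_one [Nonempty n] {X : Matrix n n ℂ} (hX : X.PosDef) :
    ∃ l : ℝ, 0 < l ∧ ∃ X₀ : Matrix n n ℂ, X₀.PosDef ∧ X₀.trace = 1 ∧ l • X₀ = X := by
  obtain ⟨hl, him⟩ := Complex.pos_iff.1 hX.trace_pos
  refine ⟨_, hl, X.trace.re⁻¹ • X, hX.smul (inv_pos.2 hl), ?_, ?_⟩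
  · apply Complex.ext <;> simp [trace_smul, ← him, hl.ne']
  · rw [smul_smul, mul_inv_cancel₀ hl.ne', one_smul]

lemma iSup_posDef_eq_iSup_trace_eq_one_smul [Nonempty n] {α : Type*} [CompleteLattice α]
    (F : Matrix n n ℂ → α) :
    ⨆ X : {X : Matrix n n ℂ // X.PosDef}, F X =
      ⨆ X₀ : {X : Matrix n n ℂ // X.PosDef ∧ X.trace = 1}, ⨆ l : Ioi (0 : ℝ), F (l.1 • X₀.1) := by
  refine le_antisymm (iSup_le fun ⟨X, hX⟩ => ?_) (iSup₂_le fun X₀ l => ?_)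
  · obtain ⟨l, hl, X₀, hX₀, htr, rfl⟩ := hX.exists_smul_trace_eq_one
    exact le_iSup₂_of_le (f := fun (X₀ : {X : Matrix n n ℂ // X.PosDef ∧ X.trace = 1})
      (l : Ioi (0 : ℝ)) => F (l.1 • X₀.1)) ⟨X₀, hX₀, htr⟩ ⟨l, hl⟩ le_rfl
  · exact le_iSup_of_le ⟨l.1 • X₀.1, X₀.2.1.smul l.2⟩ le_rfl

variable [DecidableEq n]

lemma rtr_smul (l : ℝ) (X : Matrix n n ℂ) : rtr (l • X) = l * rtr X := by
  simp [rtr, trace_smul]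

lemma rtr_of_isEmpty [IsEmpty n] (X : Matrix n n ℂ) : rtr X = 0 := by
  simp [rtr, trace]

variable (R : Matrix n n ℂ → Matrix n n ℂ → ℝ) (Y H : Matrix n n ℂ)

lemma rtr_mul_sub_smul_of_scaling
    (hscale : ∀ (X : Matrix n n ℂ) (l : ℝ), 0 < l → X.PosDef →
      R (l • X) Y = l * R X Y + l * Real.log l * rtr X + (1 - l) * rtr Y)
    {X₀ : Matrix n n ℂ} (hX₀ : X₀.PosDef) (htr : X₀.trace = 1) {l : ℝ} (hl : 0 < l) :
    rtr (l • X₀ * H) - R (l • X₀) Y =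
      l * (rtr (X₀ * H) - R X₀ Y + rtr Y) - l * Real.log l - rtr Y := by
  have hrtr : rtr X₀ = 1 := by simp [rtr, htr]
  rw [smul_mul, rtr_smul, hscale X₀ l hl hX₀, hrtr]
  ring

lemma iSup_posDef_rtr_mul_sub_of_isEmpty [IsEmpty n]
    (hscale : ∀ (X : Matrix n n ℂ) (l : ℝ), 0 < l → X.PosDef →
      R (l • X) Y = l * R X Y + l * Real.log l * rtr X + (1 - l) * rtr Y) :
    ⨆ X : {X : Matrix n n ℂ // X.PosDef}, ((rtr (X.1 * H) - R X.1 Y : ℝ) : EReal) = 0 := by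
  have hR : ∀ X, R X Y = 0 := fun X => by
    have h := hscale 1 2 two_pos PosDef.one
    rw [Subsingleton.elim ((2 : ℝ) • (1 : Matrix n n ℂ)) 1, rtr_of_isEmpty, rtr_of_isEmpty] at h
    rw [Subsingleton.elim X 1]
    linarith
  have : Nonempty {X : Matrix n n ℂ // X.PosDef} := ⟨⟨1, PosDef.one⟩⟩
  simp [rtr_of_isEmpty, hR]

end Matrix

theorem stmt11_general {n : Type*} [Fintype n] [DecidableEq n]
    (R : Matrix n n ℂ → Matrix n n ℂ → ℝ) (Y H : Matrix n n ℂ)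
    (hscale : ∀ (X : Matrix n n ℂ) (l : ℝ), 0 < l → X.PosDef →
      R (l • X) Y = l * R X Y + l * Real.log l * rtr X + (1 - l) * rtr Y) :
    (⨆ X : {X : Matrix n n ℂ // X.PosDef}, ((rtr (X.1 * H) - R X.1 Y : ℝ) : EReal)) =
      (EReal.exp ((⨆ X : {X : Matrix n n ℂ // X.PosDef ∧ X.trace = 1},
          ((rtr (X.1 * H) - R X.1 Y : ℝ) : EReal)) + (rtr Y : EReal) - 1) : ℝ≥0∞) -
        (rtr Y : EReal) := by
  cases isEmpty_or_nonempty n with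
  | inl _ =>
    have : IsEmpty {X : Matrix n n ℂ // X.PosDef ∧ X.trace = 1} :=
      ⟨fun X => by simpa [trace] using X.2.2⟩
    rw [iSup_posDef_rtr_mul_sub_of_isEmpty R Y H hscale, iSup_of_empty, rtr_of_isEmpty]
    simp
  | inr _ =>
    obtain ⟨-, -, W, hW, htr, -⟩ := (PosDef.one (n := n) (R := ℂ)).exists_smul_trace_eq_one
    have : Nonempty {X : Matrix n n ℂ // X.PosDef ∧ X.trace = 1} := ⟨⟨W, hW, htr⟩⟩
    rw [iSup_posDef_eq_iSup_trace_eq_one_smul fun X => ((rtr (X * H) - R X Y : ℝ) : EReal),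
      ← EReal.iSup_coe_exp_add_sub]
    refine iSup_congr fun X₀ => ?_
    rw [← Real.iSup_mul_sub_mul_log_sub]
    exact iSup_congr fun l => by rw [rtr_mul_sub_smul_of_scaling R Y H hscale X₀.2.1 X₀.2.2 l.2]

theorem stmt11 {n : Type*} [Fintype n] [DecidableEq n]
    (R : Matrix n n ℂ → Matrix n n ℂ → ℝ) (Y H : Matrix n n ℂ)
    (hY : Y.PosDef) (hH : H.IsHermitian)
    (hconv : ConvexOn ℝ {X : Matrix n n ℂ | X.PosDef} (fun X => R X Y))
    (hlsc : LowerSemicontinuousOn (fun X => R X Y) {X : Matrix n n ℂ | X.PosDef})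
    (hscale : ∀ (X : Matrix n n ℂ) (l : ℝ), 0 < l → X.PosDef →
      R (l • X) Y = l * R X Y + l * Real.log l * rtr X + (1 - l) * rtr Y) :
    (⨆ X : {X : Matrix n n ℂ // X.PosDef}, ((rtr (X.1 * H) - R X.1 Y : ℝ) : EReal)) =
      (EReal.exp ((⨆ X : {X : Matrix n n ℂ // X.PosDef ∧ X.trace = 1},
          ((rtr (X.1 * H) - R X.1 Y : ℝ) : EReal)) + (rtr Y : EReal) - 1) : ℝ≥0∞) -
        (rtr Y : EReal) :=
  stmt11_general R Y H hscale
end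

section
/- Klein's inequality with equality condition: Let A, B be Hermitian n×n matrices and f a strictly convex differentiable function on an interval containing the spectra of A and B. Then Tr[f(B)] ≥ Tr[f(A)] + Tr[f'(A)(B−A)], with equality if and only if A = B. -/
open Matrix ComplexOrder

/-!
Diagonalize `A = ∑ aᵢ uᵢuᵢ*`, `B = ∑ bⱼ vⱼvⱼ*` and put `pᵢⱼ = |⟨uᵢ, vⱼ⟩|²`. Every trace
`Tr[g(A) h(B)]` equals `∑ pᵢⱼ g(aᵢ) h(bⱼ)`, and each of the four traces in
`Tr f(B) - Tr f(A) - Tr f'(A)(B - A)` has this form (with `g` or `h` the constant `1` or the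
identity), so the difference is `∑ pᵢⱼ (f(bⱼ) - f(aᵢ) - f'(aᵢ)(bⱼ - aᵢ))`, a nonnegative combination
of tangent-line gaps of `f`. If it vanishes, strict convexity forces `⟨uᵢ, vⱼ⟩ = 0` whenever
`aᵢ ≠ bⱼ`, so the unitary `U*V` intertwines the two diagonal matrices of eigenvalues and `A = B`.
-/

theorem StrictConvexOn.add_deriv_mul_sub_lt {S : Set ℝ} {f : ℝ → ℝ} (hf : StrictConvexOn ℝ S f)
    {x y : ℝ} (hx : x ∈ S) (hy : y ∈ S) (hxy : x ≠ y) (hfx : DifferentiableAt ℝ f x) :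
    f x + deriv f x * (y - x) < f y := by
  rcases hxy.lt_or_gt with hlt | hgt
  · have := hf.deriv_lt_slope hx hy hlt hfx
    rw [slope_def_field, lt_div_iff₀ (sub_pos.2 hlt)] at this
    linarith
  · have := hf.slope_lt_deriv hy hx hgt hfx
    rw [slope_def_field, div_lt_iff₀ (sub_pos.2 hgt)] at this
    linarith

theorem StrictConvexOn.add_deriv_mul_sub_le {S : Set ℝ} {f : ℝ → ℝ} (hf : StrictConvexOn ℝ S f)
    {x y : ℝ} (hx : x ∈ S) (hy : y ∈ S) (hfx : DifferentiableAt ℝ f x) :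
    f x + deriv f x * (y - x) ≤ f y := by
  rcases eq_or_ne x y with rfl | hxy
  · simp
  · exact (hf.add_deriv_mul_sub_lt hx hy hxy hfx).le

namespace Matrix

variable {n : Type*} [Fintype n] [DecidableEq n] {A B : Matrix n n ℂ}

noncomputable def IsHermitian.eigenvectorOverlap (hA : A.IsHermitian) (hB : B.IsHermitian) :
    Matrix n n ℂ :=
  star (hA.eigenvectorUnitary : Matrix n n ℂ) * hB.eigenvectorUnitary

lemma IsHermitian.eigenvectorOverlap_mul_star (hA : A.IsHermitian) (hB : B.IsHermitian) :
    hA.eigenvectorOverlap hB * star (hA.eigenvectorOverlap hB) = 1 := by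
  simp only [eigenvectorOverlap, star_mul, star_star, mul_assoc]
  rw [← mul_assoc (hB.eigenvectorUnitary : Matrix n n ℂ),
    Unitary.mul_star_self_of_mem (SetLike.coe_mem _), one_mul,
    Unitary.star_mul_self_of_mem (SetLike.coe_mem _)]

lemma IsHermitian.trace_cfc_mul_cfc (hA : A.IsHermitian) (hB : B.IsHermitian) (g h : ℝ → ℝ) :
    (cfc g A * cfc h B).trace = ∑ i, ∑ j, ((g (hA.eigenvalues i) * h (hB.eigenvalues j) *
      Complex.normSq (hA.eigenvectorOverlap hB i j) : ℝ) : ℂ) := by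
  set M := hA.eigenvectorOverlap hB
  have hcycle : (cfc g A * cfc h B).trace = (diagonal (RCLike.ofReal ∘ g ∘ hA.eigenvalues) *
      (M * diagonal (RCLike.ofReal ∘ h ∘ hB.eigenvalues) * star M)).trace := by
    simp only [hA.cfc_eq, hB.cfc_eq, IsHermitian.cfc, Unitary.conjStarAlgAut_apply, M,
      eigenvectorOverlap, star_mul, star_star, mul_assoc]
    rw [trace_mul_comm]
    simp only [mul_assoc]
  rw [hcycle, trace]
  refine Finset.sum_congr rfl fun i _ => ?_
  rw [diag_apply, diagonal_mul, mul_apply, Finset.mul_sum]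
  refine Finset.sum_congr rfl fun j _ => ?_
  simp only [mul_diagonal, star_apply, Function.comp_apply, RCLike.ofReal_eq_complex_ofReal]
  push_cast
  rw [← Complex.mul_conj, Complex.star_def]
  ring

lemma IsHermitian.continuousOn_spectrum (hA : A.IsHermitian) (g : ℝ → ℝ) :
    ContinuousOn g (spectrum ℝ A) :=
  (hA.spectrum_real_eq_range_eigenvalues ▸ Set.finite_range _).continuousOn g

lemma IsHermitian.rtr_cfc_sub_tangent (hA : A.IsHermitian) (hB : B.IsHermitian) (f g : ℝ → ℝ) :
    rtr (cfc f B) - (rtr (cfc f A) + rtr (cfc g A * (B - A))) =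
      ∑ i, ∑ j, Complex.normSq (hA.eigenvectorOverlap hB i j) *
        (f (hB.eigenvalues j) - f (hA.eigenvalues i) -
          g (hA.eigenvalues i) * (hB.eigenvalues j - hA.eigenvalues i)) := by
  have hfB : cfc f B = cfc (fun _ : ℝ => (1 : ℝ)) A * cfc f B := by rw [cfc_const_one ℝ A, one_mul]
  have hfA : cfc f A = cfc f A * cfc (fun _ : ℝ => (1 : ℝ)) B := by rw [cfc_const_one ℝ B, mul_one]
  have hgA : cfc g A * (B - A) =
      cfc g A * cfc (id : ℝ → ℝ) B - cfc (fun x => g x * x) A * cfc (fun _ : ℝ => (1 : ℝ)) B := by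
    rw [cfc_id ℝ B, cfc_const_one ℝ B, mul_one, mul_sub,
      cfc_mul g (fun x => x) A (hA.continuousOn_spectrum g), cfc_id' ℝ A]
  rw [hgA, hfB, hfA]
  simp only [rtr, trace_sub, Complex.sub_re, hA.trace_cfc_mul_cfc hB,
    Complex.re_sum, Complex.ofReal_re, ← Finset.sum_sub_distrib, ← Finset.sum_add_distrib]
  refine Finset.sum_congr rfl fun i _ => Finset.sum_congr rfl fun j _ => ?_
  rw [id_eq]
  ring

lemma IsHermitian.eq_of_eigenvectorOverlap_eq_zero (hA : A.IsHermitian) (hB : B.IsHermitian)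
    (h : ∀ i j, hA.eigenvalues i ≠ hB.eigenvalues j → hA.eigenvectorOverlap hB i j = 0) :
    A = B := by
  set M := hA.eigenvectorOverlap hB
  set U : Matrix n n ℂ := (hA.eigenvectorUnitary : Matrix n n ℂ)
  set Da : Matrix n n ℂ := diagonal (RCLike.ofReal ∘ hA.eigenvalues)
  set Db : Matrix n n ℂ := diagonal (RCLike.ofReal ∘ hB.eigenvalues)
  have hcomm : M * Db = Da * M := by
    ext i j
    rw [mul_diagonal, diagonal_mul]
    by_cases hij : hA.eigenvalues i = hB.eigenvalues j
    · simp [hij, mul_comm]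
    · simp [h i j hij]
  calc A = U * Da * star U := by rw [hA.spectral_theorem, Unitary.conjStarAlgAut_apply]
    _ = U * (Da * M * star M) * star U := by
        rw [mul_assoc Da, hA.eigenvectorOverlap_mul_star hB, mul_one]
    _ = U * (M * Db * star M) * star U := by rw [hcomm]
    _ = B := by
        conv_rhs => rw [hB.spectral_theorem, Unitary.conjStarAlgAut_apply]
        have hU : U * star U = 1 := Unitary.mul_star_self_of_mem (SetLike.coe_mem _)
        simp only [M, U, eigenvectorOverlap, star_mul, star_star, mul_assoc] at hU ⊢
        rw [hU, mul_one, ← mul_assoc, hU, one_mul]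

end Matrix

theorem stmt15_general {n : Type*} [Fintype n] [DecidableEq n]
    (A B : Matrix n n ℂ) (hA : A.IsHermitian) (hB : B.IsHermitian)
    (S : Set ℝ)
    (hAS : spectrum ℝ A ⊆ S) (hBS : spectrum ℝ B ⊆ S)
    (f : ℝ → ℝ) (hf_conv : StrictConvexOn ℝ S f)
    (hf_diff : ∀ x ∈ S, DifferentiableAt ℝ f x) :
    rtr (cfc f A) + rtr (cfc (deriv f) A * (B - A)) ≤ rtr (cfc f B) ∧
      (rtr (cfc f B) = rtr (cfc f A) + rtr (cfc (deriv f) A * (B - A)) ↔ A = B) := by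
  have ha i : hA.eigenvalues i ∈ S := hAS (hA.eigenvalues_mem_spectrum_real i)
  have hb j : hB.eigenvalues j ∈ S := hBS (hB.eigenvalues_mem_spectrum_real j)
  set w : n → n → ℝ := fun i j => Complex.normSq (hA.eigenvectorOverlap hB i j) *
    (f (hB.eigenvalues j) - f (hA.eigenvalues i) -
      deriv f (hA.eigenvalues i) * (hB.eigenvalues j - hA.eigenvalues i))
  have hgap : _ = ∑ i, ∑ j, w i j := hA.rtr_cfc_sub_tangent hB f (deriv f)
  have hw i : 0 ≤ w i := fun j => mul_nonneg (Complex.normSq_nonneg _)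
    (by linarith [hf_conv.add_deriv_mul_sub_le (ha i) (hb j) (hf_diff _ (ha i))])
  have hrow : 0 ≤ fun i => ∑ j, w i j := fun i => Fintype.sum_nonneg (hw i)
  refine ⟨by linarith [Fintype.sum_nonneg hrow], fun heq => ?_, fun hAB => by subst hAB; simp [rtr]⟩
  refine hA.eq_of_eigenvectorOverlap_eq_zero hB fun i j hij => ?_
  rw [heq, sub_self, eq_comm, Fintype.sum_eq_zero_iff_of_nonneg hrow] at hgap
  have hzero : w i j = 0 :=
    congrFun ((Fintype.sum_eq_zero_iff_of_nonneg (hw i)).1 (congrFun hgap i)) j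
  have hpos := hf_conv.add_deriv_mul_sub_lt (ha i) (hb j) hij (hf_diff _ (ha i))
  exact Complex.normSq_eq_zero.1 ((mul_eq_zero.1 hzero).resolve_right (by linarith))

theorem stmt15 {n : Type*} [Fintype n] [DecidableEq n]
    (A B : Matrix n n ℂ) (hA : A.IsHermitian) (hB : B.IsHermitian)
    (S : Set ℝ) (hS : S.OrdConnected)
    (hAS : spectrum ℝ A ⊆ S) (hBS : spectrum ℝ B ⊆ S)
    (f : ℝ → ℝ) (hf_conv : StrictConvexOn ℝ S f)
    (hf_diff : ∀ x ∈ S, DifferentiableAt ℝ f x) :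
    rtr (cfc f A) + rtr (cfc (deriv f) A * (B - A)) ≤ rtr (cfc f B) ∧
      (rtr (cfc f B) = rtr (cfc f A) + rtr (cfc (deriv f) A * (B - A)) ↔ A = B) :=
  stmt15_general A B hA hB S hAS hBS f hf_conv hf_diff
end

section
/- Let Φ : M_n → M_n be a linear map that is positive (Φ(A) ≥ 0 whenever A ≥ 0), unital (Φ(I) = I), and trace preserving. Then for every Hermitian X, the eigenvalue sequence of Φ(X) (in decreasing order) is majorized by the eigenvalue sequence of X. -/
/-!
Diagonalize `X = U diag(λ) U*` and `Φ X = V diag(μ) V*`, and let `D i j` be the `i`-th diagonal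
entry of `V* Φ(U Eⱼⱼ U*) V`. Positivity of `Φ` makes `D` entrywise nonnegative, unitality makes
its rows sum to `1` and trace preservation its columns, so `D` is doubly stochastic; linearity
gives `μ = D λ`. For a doubly stochastic `D` and a set `s` of indices,
`∑_{i ∈ s} μ i = ∑ⱼ rⱼ λⱼ` with weights `rⱼ = ∑_{i ∈ s} D i j ∈ [0, 1]` summing to `#s`, and such a
weighted sum is at most the sum of the `#s` largest `λⱼ`.
-/

open Matrix ComplexOrder

/-- `x` is majorized by `y`: every partial sum of entries of `x` is dominated by a sum of
equally many entries of `y`, and the total sums agree.  (This is equivalent to the usual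
definition via decreasing rearrangements.) -/
def Majorizes {n : Type*} [Fintype n] (x y : n → ℝ) : Prop :=
  (∀ s : Finset n, ∃ t : Finset n, t.card = s.card ∧ ∑ i ∈ s, x i ≤ ∑ i ∈ t, y i) ∧
    ∑ i, x i = ∑ i, y i

section Majorization

variable {ι : Type*} [Fintype ι]

lemma exists_card_eq_forall_mem_forall_notMem_le (f : ι → ℝ) {k : ℕ}
    (hk : k ≤ Fintype.card ι) :
    ∃ t : Finset ι, t.card = k ∧ ∀ i ∈ t, ∀ j ∉ t, f j ≤ f i := by
  classical
  have hne : (Finset.univ.powersetCard k : Finset (Finset ι)).Nonempty :=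
    Finset.powersetCard_nonempty.mpr (by simpa using hk)
  obtain ⟨t, ht, hmax⟩ := Finset.exists_max_image _ (fun t => ∑ i ∈ t, f i) hne
  have htk := (Finset.mem_powersetCard.mp ht).2
  refine ⟨t, htk, fun i hi j hj => le_of_not_gt fun hlt => ?_⟩
  -- exchanging `i` for `j` would increase the sum over `t`
  have hj' : j ∉ t.erase i := fun h => hj (Finset.mem_of_mem_erase h)
  have hcard : (insert j (t.erase i)).card = k := by
    rw [Finset.card_insert_of_notMem hj', Finset.card_erase_of_mem hi, htk]
    have : 0 < k := htk ▸ Finset.card_pos.mpr ⟨i, hi⟩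
    omega
  have := hmax _ (Finset.mem_powersetCard.mpr ⟨Finset.subset_univ _, hcard⟩)
  rw [Finset.sum_insert hj', ← Finset.add_sum_erase t f hi] at this
  linarith

lemma exists_card_eq_threshold (f : ι → ℝ) {k : ℕ} (hk : k ≤ Fintype.card ι) :
    ∃ (t : Finset ι) (m : ℝ), t.card = k ∧ (∀ i ∈ t, m ≤ f i) ∧ ∀ j ∉ t, f j ≤ m := by
  obtain ⟨t, htk, hle⟩ := exists_card_eq_forall_mem_forall_notMem_le f hk
  rcases t.eq_empty_or_nonempty with rfl | ht
  · obtain ⟨m, hm⟩ := (Set.finite_range f).bddAbove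
    exact ⟨∅, m, htk, by simp, fun j _ => hm ⟨j, rfl⟩⟩
  · exact ⟨t, t.inf' ht f, htk, fun i hi => t.inf'_le f hi,
      fun j hj => t.le_inf' ht f fun i hi => hle i hi j hj⟩

lemma sum_mul_le_sum_of_threshold (f r : ι → ℝ) {t : Finset ι} {m : ℝ}
    (hin : ∀ i ∈ t, m ≤ f i) (hout : ∀ j ∉ t, f j ≤ m)
    (hr₀ : ∀ i, 0 ≤ r i) (hr₁ : ∀ i, r i ≤ 1) (hsum : ∑ i, r i = t.card) :
    ∑ i, f i * r i ≤ ∑ i ∈ t, f i := by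
  classical
  have key : ∑ i ∈ t, f i - ∑ i, f i * r i
      = ∑ i, (f i - m) * ((if i ∈ t then 1 else 0) - r i) := by
    simp only [mul_sub, sub_mul, mul_ite, mul_one, mul_zero, Finset.sum_sub_distrib,
      Finset.sum_ite_mem, Finset.univ_inter, ← Finset.mul_sum, hsum]
    simp only [Finset.sum_const, nsmul_eq_mul]
    ring
  have : 0 ≤ ∑ i, (f i - m) * ((if i ∈ t then 1 else 0) - r i) := by
    refine Finset.sum_nonneg fun i _ => ?_
    split_ifs with hi
    · exact mul_nonneg (sub_nonneg.mpr (hin i hi)) (sub_nonneg.mpr (hr₁ i))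
    · exact mul_nonneg_of_nonpos_of_nonpos (sub_nonpos.mpr (hout i hi)) (by linarith [hr₀ i])
  linarith

lemma exists_card_eq_sum_mul_le (f r : ι → ℝ) (hr₀ : ∀ i, 0 ≤ r i) (hr₁ : ∀ i, r i ≤ 1)
    {k : ℕ} (hsum : ∑ i, r i = k) :
    ∃ t : Finset ι, t.card = k ∧ ∑ i, f i * r i ≤ ∑ i ∈ t, f i := by
  have hk : k ≤ Fintype.card ι := by
    have : (k : ℝ) ≤ Fintype.card ι := by
      simpa [← hsum] using Finset.sum_le_sum fun i (_ : i ∈ Finset.univ) => hr₁ i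
    exact_mod_cast this
  obtain ⟨t, m, htk, hin, hout⟩ := exists_card_eq_threshold f hk
  exact ⟨t, htk, sum_mul_le_sum_of_threshold f r hin hout hr₀ hr₁ (htk ▸ hsum)⟩

lemma majorizes_mulVec_of_mem_doublyStochastic [DecidableEq ι] {M : Matrix ι ι ℝ}
    (hM : M ∈ doublyStochastic ℝ ι) (x : ι → ℝ) : Majorizes (M *ᵥ x) x := by
  have hcol := sum_col_of_mem_doublyStochastic hM
  refine ⟨fun s => ?_, ?_⟩
  · obtain ⟨t, hts, hle⟩ := exists_card_eq_sum_mul_le x (fun j => ∑ i ∈ s, M i j)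
      (fun j => Finset.sum_nonneg fun i _ => nonneg_of_mem_doublyStochastic hM)
      (fun j => hcol j ▸ Finset.sum_le_sum_of_subset_of_nonneg (Finset.subset_univ s)
        fun i _ _ => nonneg_of_mem_doublyStochastic hM)
      (k := s.card) (by
        rw [Finset.sum_comm]
        simp [sum_row_of_mem_doublyStochastic hM])
    refine ⟨t, hts, le_of_eq_of_le ?_ hle⟩
    simp only [mulVec, dotProduct, Finset.mul_sum]
    rw [Finset.sum_comm]
    exact Finset.sum_congr rfl fun i _ => Finset.sum_congr rfl fun j _ => mul_comm _ _
  · simp only [mulVec, dotProduct]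
    rw [Finset.sum_comm]
    simp [← Finset.sum_mul, hcol]

end Majorization

section TransferMatrix

open Unitary

variable {n : Type*} [Fintype n] [DecidableEq n]

lemma Matrix.PosSemidef.conjStarAlgAut {𝕜 : Type*} [RCLike 𝕜] {A : Matrix n n 𝕜}
    (hA : A.PosSemidef) (U : unitaryGroup n 𝕜) : (conjStarAlgAut 𝕜 _ U A).PosSemidef := by
  simpa [conjStarAlgAut_apply, star_eq_conjTranspose] using
    hA.mul_mul_conjTranspose_same (U : Matrix n n 𝕜)

lemma Matrix.trace_conjStarAlgAut {𝕜 : Type*} [RCLike 𝕜] (U : unitaryGroup n 𝕜)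
    (A : Matrix n n 𝕜) : (conjStarAlgAut 𝕜 _ U A).trace = A.trace := by
  rw [conjStarAlgAut_apply, trace_mul_cycle, coe_star_mul_self, Matrix.one_mul]

noncomputable def transferMatrix (Φ : Matrix n n ℂ →ₗ[ℂ] Matrix n n ℂ)
    (U V : unitaryGroup n ℂ) : Matrix n n ℝ :=
  of fun i j => (conjStarAlgAut ℂ _ (star V) (Φ (conjStarAlgAut ℂ _ U (single j j 1))) i i).re

lemma conjStarAlgAut_diagonal_apply_re (Φ : Matrix n n ℂ →ₗ[ℂ] Matrix n n ℂ)
    (U V : unitaryGroup n ℂ) (d : n → ℝ) (i : n) :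
    (conjStarAlgAut ℂ _ (star V) (Φ (conjStarAlgAut ℂ _ U (diagonal (RCLike.ofReal ∘ d)))) i i).re
      = (transferMatrix Φ U V *ᵥ d) i := by
  have hd : diagonal (RCLike.ofReal ∘ d) = ∑ j, (d j : ℂ) • single j j (1 : ℂ) := by
    simp [← sum_single_eq_diagonal, smul_single]
  simp only [hd, map_sum, map_smul, Matrix.sum_apply, Matrix.smul_apply, smul_eq_mul,
    Complex.re_sum, Complex.re_ofReal_mul, transferMatrix, mulVec, dotProduct, of_apply, mul_comm]

lemma transferMatrix_mem_doublyStochastic {Φ : Matrix n n ℂ →ₗ[ℂ] Matrix n n ℂ}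
    (hpos : ∀ A : Matrix n n ℂ, A.PosSemidef → (Φ A).PosSemidef)
    (hunital : Φ 1 = 1) (htr : ∀ A : Matrix n n ℂ, (Φ A).trace = A.trace)
    (U V : unitaryGroup n ℂ) : transferMatrix Φ U V ∈ doublyStochastic ℝ n := by
  refine mem_doublyStochastic_iff_sum.mpr ⟨fun i j => ?_, fun i => ?_, fun j => ?_⟩
  · have hE : (single j j (1 : ℂ)).PosSemidef := by
      rw [← diagonal_single]
      exact PosSemidef.diagonal (Pi.single_nonneg.mpr zero_le_one)
    have hD := ((hpos _ (hE.conjStarAlgAut U)).conjStarAlgAut (star V)).diag_nonneg (i := i)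
    exact (Complex.nonneg_iff.mp hD).1
  · have : ∑ j, conjStarAlgAut ℂ _ (star V) (Φ (conjStarAlgAut ℂ _ U (single j j (1 : ℂ))))
        = 1 := by
      rw [← map_sum, ← map_sum, ← map_sum, sum_single_one, map_one, hunital, map_one]
    simp only [transferMatrix, of_apply, ← Complex.re_sum, ← Matrix.sum_apply, this, one_apply_eq,
      Complex.one_re]
  · simp only [transferMatrix, of_apply, ← Complex.re_sum]
    change (trace (_ : Matrix n n ℂ)).re = 1
    rw [trace_conjStarAlgAut, htr, trace_conjStarAlgAut, trace_single_eq_same, Complex.one_re]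

end TransferMatrix

theorem stmt16 {n : Type*} [Fintype n] [DecidableEq n]
    (Φ : Matrix n n ℂ →ₗ[ℂ] Matrix n n ℂ)
    (hpos : ∀ A : Matrix n n ℂ, A.PosSemidef → (Φ A).PosSemidef)
    (hunital : Φ 1 = 1)
    (htr : ∀ A : Matrix n n ℂ, (Φ A).trace = A.trace)
    (X : Matrix n n ℂ) (hX : X.IsHermitian) :
    ∀ hΦX : (Φ X).IsHermitian, Majorizes hΦX.eigenvalues hX.eigenvalues := by
  intro hΦX
  have heig : hΦX.eigenvalues =
      transferMatrix Φ hX.eigenvectorUnitary hΦX.eigenvectorUnitary *ᵥ hX.eigenvalues := by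
    funext i
    rw [← conjStarAlgAut_diagonal_apply_re, ← hX.spectral_theorem,
      hΦX.conjStarAlgAut_star_eigenvectorUnitary, diagonal_apply_eq]
    rfl
  rw [heig]
  exact majorizes_mulVec_of_mem_doublyStochastic
    (transferMatrix_mem_doublyStochastic hpos hunital htr _ _) _
end

section
/- The map (A,B) ↦ (A⁻¹ + B⁻¹)⁻¹ is jointly operator concave on pairs of positive definite n×n matrices; equivalently, for positive definite A₁, A₂, B₁, B₂ and t ∈ [0,1], ((((1-t)A₁+tA₂)⁻¹ + ((1-t)B₁+tB₂)⁻¹)⁻¹ ≥ (1-t)(A₁⁻¹+B₁⁻¹)⁻¹ + t(A₂⁻¹+B₂⁻¹)⁻¹ in the Loewner order. -/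
/-!
For positive definite `A`, `B` and any matrix `Y`, completing the square gives
`Yᴴ A Y + (1 - Y)ᴴ B (1 - Y) - (A⁻¹ + B⁻¹)⁻¹ = Zᴴ (A + B) Z ≥ 0` with `Z = Y - (A + B)⁻¹ B`.
So `(A⁻¹ + B⁻¹)⁻¹` is the minimum over `Y` of a form that is linear in `(A, B)`, attained at
`Y = (A + B)⁻¹ B`. Evaluating at the minimiser for the convex combination and bounding each
summand below by its own minimum gives joint concavity.
-/

open Matrix ComplexOrder

namespace Matrix

variable {n 𝕜 : Type*} [RCLike 𝕜]

lemma PosDef.smul_add_smul {A B : Matrix n n 𝕜} (hA : A.PosDef) (hB : B.PosDef) {a b : ℝ}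
    (ha : 0 ≤ a) (hb : 0 ≤ b) (hab : 0 < a + b) : (a • A + b • B).PosDef := by
  rcases ha.eq_or_lt with rfl | ha
  · simpa using hB.smul (by simpa using hab)
  · exact (hA.smul ha).add_posSemidef (hB.posSemidef.smul hb)

variable [Fintype n] [DecidableEq n]

section CommRing

variable {R : Type*} [CommRing R]

lemma inv_add_inv_inv_eq {A B : Matrix n n R} (hA : IsUnit A) (hB : IsUnit B)
    (hAB : IsUnit (A + B)) : (A⁻¹ + B⁻¹)⁻¹ = B - B * (A + B)⁻¹ * B := by
  rw [isUnit_iff_isUnit_det] at hA hB hAB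
  have hfactor : A⁻¹ + B⁻¹ = A⁻¹ * (A + B) * B⁻¹ := by
    rw [Matrix.mul_add, Matrix.add_mul, nonsing_inv_mul A hA, Matrix.one_mul,
      mul_nonsing_inv_cancel_right _ _ hB, add_comm]
  rw [hfactor, mul_inv_rev, mul_inv_rev, nonsing_inv_nonsing_inv A hA,
    nonsing_inv_nonsing_inv B hB, ← Matrix.mul_assoc]
  calc B * (A + B)⁻¹ * A = B * (A + B)⁻¹ * ((A + B) - B) := by rw [add_sub_cancel_right]
    _ = B - B * (A + B)⁻¹ * B := by
      rw [Matrix.mul_sub, nonsing_inv_mul_cancel_right _ _ hAB]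

variable [StarRing R]

def splitForm (A B Y : Matrix n n R) : Matrix n n R :=
  Yᴴ * A * Y + (1 - Y)ᴴ * B * (1 - Y)

lemma splitForm_add (A₁ A₂ B₁ B₂ Y : Matrix n n R) :
    splitForm (A₁ + A₂) (B₁ + B₂) Y = splitForm A₁ B₁ Y + splitForm A₂ B₂ Y := by
  simp only [splitForm, Matrix.mul_add, Matrix.add_mul]
  abel

lemma splitForm_smul {S : Type*} [Monoid S] [DistribMulAction S R] [IsScalarTower S R R]
    [SMulCommClass S R R] (c : S) (A B Y : Matrix n n R) :
    splitForm (c • A) (c • B) Y = c • splitForm A B Y := by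
  simp only [splitForm, Matrix.mul_smul, Matrix.smul_mul, smul_add]

lemma splitForm_sub_inv_add_inv_inv {A B : Matrix n n R} (hA : A.IsHermitian)
    (hB : B.IsHermitian) (hA' : IsUnit A) (hB' : IsUnit B) (hAB : IsUnit (A + B))
    (Y : Matrix n n R) :
    splitForm A B Y - (A⁻¹ + B⁻¹)⁻¹ =
      (Y - (A + B)⁻¹ * B)ᴴ * (A + B) * (Y - (A + B)⁻¹ * B) := by
  have hS : (A + B)⁻¹ᴴ = (A + B)⁻¹ := by rw [conjTranspose_nonsing_inv, (hA.add hB).eq]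
  rw [inv_add_inv_inv_eq hA' hB' hAB, splitForm]
  rw [isUnit_iff_isUnit_det] at hAB
  nth_rewrite 1 [← add_sub_cancel_right A B]
  simp only [conjTranspose_sub, conjTranspose_mul, conjTranspose_one, hS, hB.eq,
    Matrix.sub_mul, Matrix.mul_sub, Matrix.one_mul, Matrix.mul_one, Matrix.mul_assoc,
    mul_nonsing_inv_cancel_left _ _ hAB, nonsing_inv_mul_cancel_left _ _ hAB]
  abel

end CommRing

namespace PosDef

variable {A B : Matrix n n 𝕜} (hA : A.PosDef) (hB : B.PosDef)
include hA hB

lemma posSemidef_splitForm_sub_inv_add_inv_inv (Y : Matrix n n 𝕜) :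
    (splitForm A B Y - (A⁻¹ + B⁻¹)⁻¹).PosSemidef := by
  rw [splitForm_sub_inv_add_inv_inv hA.1 hB.1 hA.isUnit hB.isUnit (hA.add hB).isUnit]
  exact (hA.add hB).posSemidef.conjTranspose_mul_mul_same _

lemma splitForm_inv_add_mul_eq : splitForm A B ((A + B)⁻¹ * B) = (A⁻¹ + B⁻¹)⁻¹ := by
  rw [← sub_eq_zero, splitForm_sub_inv_add_inv_inv hA.1 hB.1 hA.isUnit hB.isUnit
    (hA.add hB).isUnit, sub_self, Matrix.mul_zero]

end PosDef

end Matrix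

theorem stmt18 {n : Type*} [Fintype n] [DecidableEq n]
    (A₁ A₂ B₁ B₂ : Matrix n n ℂ) (hA₁ : A₁.PosDef) (hA₂ : A₂.PosDef)
    (hB₁ : B₁.PosDef) (hB₂ : B₂.PosDef) (t : ℝ) (ht : t ∈ Set.Icc (0 : ℝ) 1) :
    ((((1 - t) • A₁ + t • A₂)⁻¹ + ((1 - t) • B₁ + t • B₂)⁻¹)⁻¹ -
      ((1 - t) • (A₁⁻¹ + B₁⁻¹)⁻¹ + t • (A₂⁻¹ + B₂⁻¹)⁻¹)).PosSemidef := by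
  obtain ⟨ht₀, ht₁⟩ := ht
  have hA := hA₁.smul_add_smul hA₂ (sub_nonneg.2 ht₁) ht₀ (by simp)
  have hB := hB₁.smul_add_smul hB₂ (sub_nonneg.2 ht₁) ht₀ (by simp)
  set Y := ((1 - t) • A₁ + t • A₂ + ((1 - t) • B₁ + t • B₂))⁻¹ * ((1 - t) • B₁ + t • B₂)
  rw [← hA.splitForm_inv_add_mul_eq hB, splitForm_add, splitForm_smul, splitForm_smul,
    add_sub_add_comm, ← smul_sub, ← smul_sub]
  exact ((hA₁.posSemidef_splitForm_sub_inv_add_inv_inv hB₁ Y).smul (sub_nonneg.2 ht₁)).add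
    ((hA₂.posSemidef_splitForm_sub_inv_add_inv_inv hB₂ Y).smul ht₀)
end

section
/- The map (X,Y) ↦ −X^{1/2} log(X^{1/2} Y⁻¹ X^{1/2}) X^{1/2} is jointly operator concave on pairs of positive definite n×n matrices. -/
open Matrix ComplexOrder

noncomputable def msqrt {n : Type*} [Fintype n] [DecidableEq n] (A : Matrix n n ℂ) :
    Matrix n n ℂ :=
  cfc (fun x : ℝ => Real.sqrt x) A

/-!
Write `S = X^{1/2}` and `A = S Y⁻¹ S`, and diagonalise `A = U diag(d) U*`. For a vector `v` put
`w k = |(U* S v) k|²`. Then `⟨v, G(X,Y) v⟩ = -∑ w k log (d k)`, while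
`(λ X⁻¹ + Y⁻¹)⁻¹ = S (A + λ)⁻¹ S` and `X = S S` give `⟨v, (λ X⁻¹ + Y⁻¹)⁻¹ v⟩ = ∑ w k / (d k + λ)`
and `⟨v, X v⟩ = ∑ w k`. Hence the scalar formula `-log d = ∫₀^∞ ((d + λ)⁻¹ - (1 + λ)⁻¹) dλ` yields
`⟨v, G(X,Y) v⟩ = ∫₀^∞ (⟨v, (λ X⁻¹ + Y⁻¹)⁻¹ v⟩ - ⟨v, X v⟩ / (1 + λ)) dλ`.
For each `λ` the integrand is jointly concave in `(X, Y)`: the parallel sum `(P⁻¹ + Q⁻¹)⁻¹`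
satisfies `⟨v, (P⁻¹ + Q⁻¹)⁻¹ v⟩ = min_{x + y = v} (⟨x, P x⟩ + ⟨y, Q y⟩)`, an infimum of functions
that are linear in `(P, Q)`. Integration preserves concavity.
-/

open MeasureTheory Set Filter Topology

section ParallelSum

variable {n 𝕜 : Type*} [Fintype n] [DecidableEq n] [Field 𝕜]

theorem inv_add_inv_inv_eq_mul_inv_add_mul {A B : Matrix n n 𝕜} (hA : IsUnit A.det)
    (hB : IsUnit B.det) : (A⁻¹ + B⁻¹)⁻¹ = A * (A + B)⁻¹ * B := by
  have : A⁻¹ + B⁻¹ = B⁻¹ * (A + B) * A⁻¹ := by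
    rw [mul_add, add_mul, mul_nonsing_inv_cancel_right _ _ hA, nonsing_inv_mul _ hB, one_mul,
      add_comm]
  rw [this, Matrix.mul_inv_rev, Matrix.mul_inv_rev, nonsing_inv_nonsing_inv _ hA,
    nonsing_inv_nonsing_inv _ hB, mul_assoc]

theorem dotProduct_mulVec_add_dotProduct_mulVec [StarRing 𝕜] {A B : Matrix n n 𝕜}
    (hA : A.IsHermitian) (hB : B.IsHermitian) (hAu : IsUnit A.det) (hBu : IsUnit B.det)
    (hABu : IsUnit (A + B).det) (x y : n → 𝕜) :
    star x ⬝ᵥ A *ᵥ x + star y ⬝ᵥ B *ᵥ y =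
      star (x + y) ⬝ᵥ (A⁻¹ + B⁻¹)⁻¹ *ᵥ (x + y) +
        star (A *ᵥ x - B *ᵥ y) ⬝ᵥ (A + B)⁻¹ *ᵥ (A *ᵥ x - B *ᵥ y) := by
  have hAB : A * (A + B)⁻¹ * B = (A⁻¹ + B⁻¹)⁻¹ :=
    (inv_add_inv_inv_eq_mul_inv_add_mul hAu hBu).symm
  have hBA : B * (A + B)⁻¹ * A = (A⁻¹ + B⁻¹)⁻¹ := by
    rw [add_comm A⁻¹, add_comm A, inv_add_inv_inv_eq_mul_inv_add_mul hBu hAu]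
  have hAA : A * (A + B)⁻¹ * A = A - (A⁻¹ + B⁻¹)⁻¹ := by
    rw [← hAB, eq_sub_iff_add_eq, mul_assoc, mul_assoc, ← mul_add, ← mul_add,
      nonsing_inv_mul _ hABu, mul_one]
  have hBB : B * (A + B)⁻¹ * B = B - (A⁻¹ + B⁻¹)⁻¹ := by
    rw [← hBA, eq_sub_iff_add_eq, mul_assoc, mul_assoc, ← mul_add, ← mul_add, add_comm B,
      nonsing_inv_mul _ hABu, mul_one]
  simp only [star_add, star_sub, star_mulVec, hA.eq, hB.eq, add_dotProduct, sub_dotProduct,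
    mulVec_add, mulVec_sub, dotProduct_add, dotProduct_sub, ← dotProduct_mulVec, mulVec_mulVec,
    ← mul_assoc, hAB, hBA, hAA, hBB, sub_mulVec]
  abel

end ParallelSum

section PosDef

variable {n 𝕜 : Type*} [RCLike 𝕜]

theorem convex_setOf_posDef : Convex ℝ {A : Matrix n n 𝕜 | A.PosDef} :=
  convex_iff_forall_pos.2 fun _ hA _ hB _ _ ha hb _ => (hA.smul ha).add (hB.smul hb)

variable [Fintype n]

theorem Matrix.IsHermitian.posSemidef_of_re_dotProduct_mulVec_nonneg {A : Matrix n n 𝕜}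
    (hA : A.IsHermitian) (h : ∀ x, 0 ≤ RCLike.re (star x ⬝ᵥ A *ᵥ x)) : A.PosSemidef :=
  .of_dotProduct_mulVec_nonneg hA fun x =>
    RCLike.nonneg_iff.2 ⟨h x, hA.im_star_dotProduct_mulVec_self x⟩

variable [DecidableEq n]

theorem Matrix.IsHermitian.re_dotProduct_cfc_mulVec {A : Matrix n n 𝕜} (hA : A.IsHermitian)
    (f : ℝ → ℝ) (x : n → 𝕜) :
    RCLike.re (star x ⬝ᵥ cfc f A *ᵥ x) =
      ∑ i, f (hA.eigenvalues i) * ‖(star (hA.eigenvectorUnitary : Matrix n n 𝕜) *ᵥ x) i‖ ^ 2 := by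
  rw [cfc_eq hA, IsHermitian.cfc, Unitary.conjStarAlgAut_apply, ← mulVec_mulVec, ← mulVec_mulVec,
    dotProduct_mulVec]
  set w := star (hA.eigenvectorUnitary : Matrix n n 𝕜) *ᵥ x
  have hw : star x ᵥ* (hA.eigenvectorUnitary : Matrix n n 𝕜) = star w := by
    rw [star_mulVec, star_eq_conjTranspose, conjTranspose_conjTranspose]
  rw [hw, dotProduct, map_sum]
  refine Finset.sum_congr rfl fun i _ => ?_
  rw [mulVec_diagonal, Pi.star_apply, RCLike.star_def, mul_left_comm, RCLike.conj_mul]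
  simp

theorem Matrix.PosDef.isUnit_det {A : Matrix n n 𝕜} (hA : A.PosDef) : IsUnit A.det :=
  (isUnit_iff_isUnit_det A).1 hA.isUnit

theorem Matrix.PosDef.re_dotProduct_inv_add_inv_inv_le {A B : Matrix n n 𝕜} (hA : A.PosDef)
    (hB : B.PosDef) (x y : n → 𝕜) :
    RCLike.re (star (x + y) ⬝ᵥ (A⁻¹ + B⁻¹)⁻¹ *ᵥ (x + y)) ≤
      RCLike.re (star x ⬝ᵥ A *ᵥ x) + RCLike.re (star y ⬝ᵥ B *ᵥ y) := by
  have h := congrArg RCLike.re <| dotProduct_mulVec_add_dotProduct_mulVec hA.isHermitian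
    hB.isHermitian hA.isUnit_det hB.isUnit_det (hA.add hB).isUnit_det x y
  rw [map_add, map_add] at h
  linarith [(hA.add hB).inv.posSemidef.re_dotProduct_nonneg (A *ᵥ x - B *ᵥ y)]

theorem Matrix.PosDef.exists_re_dotProduct_inv_add_inv_inv_eq {A B : Matrix n n 𝕜}
    (hA : A.PosDef) (hB : B.PosDef) (v : n → 𝕜) :
    ∃ x, RCLike.re (star v ⬝ᵥ (A⁻¹ + B⁻¹)⁻¹ *ᵥ v) =
      RCLike.re (star x ⬝ᵥ A *ᵥ x) + RCLike.re (star (v - x) ⬝ᵥ B *ᵥ (v - x)) := by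
  refine ⟨(A + B)⁻¹ *ᵥ B *ᵥ v, ?_⟩
  have hmin : A *ᵥ ((A + B)⁻¹ *ᵥ B *ᵥ v) - B *ᵥ (v - (A + B)⁻¹ *ᵥ B *ᵥ v) = 0 := by
    rw [mulVec_sub, sub_sub_eq_add_sub, ← add_mulVec, mulVec_mulVec,
      mul_nonsing_inv _ (hA.add hB).isUnit_det, one_mulVec, sub_self]
  rw [← map_add, dotProduct_mulVec_add_dotProduct_mulVec hA.isHermitian hB.isHermitian
    hA.isUnit_det hB.isUnit_det (hA.add hB).isUnit_det, hmin, add_sub_cancel, mulVec_zero,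
    dotProduct_zero, add_zero]

theorem concaveOn_re_dotProduct_inv_add_inv_inv (v : n → 𝕜) :
    ConcaveOn ℝ ({A : Matrix n n 𝕜 | A.PosDef} ×ˢ {B : Matrix n n 𝕜 | B.PosDef})
      fun p => RCLike.re (star v ⬝ᵥ (p.1⁻¹ + p.2⁻¹)⁻¹ *ᵥ v) := by
  have hconv := convex_setOf_posDef (n := n) (𝕜 := 𝕜)
  refine ⟨hconv.prod hconv, fun p hp q hq a b ha hb hab => ?_⟩
  obtain ⟨hA, hB⟩ := hconv.prod hconv hp hq ha hb hab
  obtain ⟨x, hx⟩ := hA.exists_re_dotProduct_inv_add_inv_inv_eq hB v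
  have hp' := hp.1.re_dotProduct_inv_add_inv_inv_le hp.2 x (v - x)
  have hq' := hq.1.re_dotProduct_inv_add_inv_inv_le hq.2 x (v - x)
  rw [add_sub_cancel] at hp' hq'
  simp only [Prod.fst_add, Prod.snd_add, Prod.smul_fst, Prod.smul_snd] at hx ⊢
  rw [hx]
  simp only [add_mulVec, smul_mulVec, dotProduct_add, dotProduct_smul, map_add, RCLike.smul_re,
    smul_eq_mul]
  linarith [mul_le_mul_of_nonneg_left hp' ha, mul_le_mul_of_nonneg_left hq' hb]

end PosDef

section LogIntegral

variable {d : ℝ}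

theorem hasDerivAt_log_add_sub_log_one_add (hd : 0 < d) {x : ℝ} (hx : 0 ≤ x) :
    HasDerivAt (fun y => Real.log (d + y) - Real.log (1 + y)) ((d + x)⁻¹ - (1 + x)⁻¹) x := by
  have h₁ := ((hasDerivAt_id x).const_add d).log (by simp; linarith)
  have h₂ := ((hasDerivAt_id x).const_add 1).log (by simp; linarith)
  simpa [one_div] using h₁.fun_sub h₂

theorem tendsto_log_add_sub_log_one_add_atTop (hd : 0 < d) :
    Tendsto (fun y => Real.log (d + y) - Real.log (1 + y)) atTop (𝓝 0) := by
  have hratio : Tendsto (fun y : ℝ => 1 + (d - 1) / (1 + y)) atTop (𝓝 1) := by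
    simpa using (tendsto_const_nhds (x := (1 : ℝ))).add
      (tendsto_const_nhds.div_atTop (tendsto_atTop_add_const_left _ 1 tendsto_id))
  have hlog := (Real.continuousAt_log one_ne_zero).tendsto.comp hratio
  rw [Real.log_one] at hlog
  refine hlog.congr' ?_
  filter_upwards [eventually_gt_atTop 0] with y hy
  rw [Function.comp_apply, ← Real.log_div (by linarith) (by linarith)]
  congr 1
  field_simp
  ring

theorem integrableOn_inv_add_sub_inv_one_add (hd : 0 < d) :
    IntegrableOn (fun y => (d + y)⁻¹ - (1 + y)⁻¹) (Ioi 0) := by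
  have hderiv := fun x (hx : x ∈ Ici (0 : ℝ)) => hasDerivAt_log_add_sub_log_one_add hd hx
  rcases le_total d 1 with h | h
  · refine integrableOn_Ioi_deriv_of_nonneg' hderiv (fun x (hx : 0 < x) => ?_)
      (tendsto_log_add_sub_log_one_add_atTop hd)
    linarith [inv_anti₀ (by linarith : 0 < d + x) (by linarith : d + x ≤ 1 + x)]
  · refine integrableOn_Ioi_deriv_of_nonpos' hderiv (fun x (hx : 0 < x) => ?_)
      (tendsto_log_add_sub_log_one_add_atTop hd)
    linarith [inv_anti₀ (by linarith : 0 < 1 + x) (by linarith : 1 + x ≤ d + x)]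

theorem integral_inv_add_sub_inv_one_add (hd : 0 < d) :
    ∫ y in Ioi 0, ((d + y)⁻¹ - (1 + y)⁻¹) = -Real.log d := by
  simpa using integral_Ioi_of_hasDerivAt_of_tendsto'
    (fun x (hx : x ∈ Ici (0 : ℝ)) => hasDerivAt_log_add_sub_log_one_add hd hx)
    (integrableOn_inv_add_sub_inv_one_add hd) (tendsto_log_add_sub_log_one_add_atTop hd)

end LogIntegral

theorem concaveOn_integral {α E : Type*} [MeasurableSpace α] {μ : Measure α} [AddCommGroup E]
    [Module ℝ E] {s : Set E} {f : E → α → ℝ} (hs : Convex ℝ s)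
    (hf : ∀ᵐ a ∂μ, ConcaveOn ℝ s fun x => f x a) (hint : ∀ x ∈ s, Integrable (f x) μ) :
    ConcaveOn ℝ s fun x => ∫ a, f x a ∂μ := by
  refine ⟨hs, fun x hx y hy a b ha hb hab => ?_⟩
  rw [smul_eq_mul, smul_eq_mul, ← integral_const_mul, ← integral_const_mul,
    ← integral_add ((hint x hx).const_mul a) ((hint y hy).const_mul b)]
  exact integral_mono_ae (((hint x hx).const_mul a).add ((hint y hy).const_mul b))
    (hint _ (hs hx hy ha hb hab)) (hf.mono fun _ h => h.2 hx hy ha hb hab)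

section RelEntropy

variable {n : Type*} [Fintype n] [DecidableEq n]

open scoped MatrixOrder

/-- The Fujii–Kamei operator relative entropy `X^{1/2} log (X^{-1/2} Y X^{-1/2}) X^{1/2}`. -/
noncomputable def relEntropy (X Y : Matrix n n ℂ) : Matrix n n ℂ :=
  -(msqrt X * mlog (msqrt X * Y⁻¹ * msqrt X) * msqrt X)

noncomputable def relEntropyIntegrand (X Y : Matrix n n ℂ) (v : n → ℂ) (l : ℝ) : ℝ :=
  RCLike.re (star v ⬝ᵥ (l • X⁻¹ + Y⁻¹)⁻¹ *ᵥ v) - RCLike.re (star v ⬝ᵥ X *ᵥ v) / (1 + l)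

theorem isHermitian_msqrt (X : Matrix n n ℂ) : (msqrt X).IsHermitian :=
  cfc_predicate _ _

theorem msqrt_mul_msqrt {X : Matrix n n ℂ} (hX : X.PosSemidef) : msqrt X * msqrt X = X := by
  rw [msqrt, ← cfc_mul ..]
  conv_rhs => rw [← cfc_id' ℝ X]
  exact cfc_congr fun x hx => Real.mul_self_sqrt (spectrum_nonneg_of_nonneg hX.nonneg hx)

theorem isUnit_msqrt {X : Matrix n n ℂ} (hX : X.PosDef) : IsUnit (msqrt X) :=
  ((Commute.refl _).isUnit_mul_iff.1 ((msqrt_mul_msqrt hX.posSemidef).symm ▸ hX.isUnit)).1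

theorem posDef_msqrt_mul_inv_mul_msqrt {X Y : Matrix n n ℂ} (hX : X.PosDef) (hY : Y.PosDef) :
    (msqrt X * Y⁻¹ * msqrt X).PosDef := by
  have := (IsUnit.posDef_star_left_conjugate_iff (isUnit_msqrt hX)).2 hY.inv
  rwa [star_eq_conjTranspose, (isHermitian_msqrt X).eq] at this

theorem isHermitian_relEntropy (X Y : Matrix n n ℂ) : (relEntropy X Y).IsHermitian := by
  have h := isHermitian_conjTranspose_mul_mul (msqrt X)
    (cfc_predicate Real.log (msqrt X * Y⁻¹ * msqrt X) : (mlog _).IsHermitian)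
  rw [(isHermitian_msqrt X).eq] at h
  exact h.neg

theorem relEntropy_eq_msqrt_mul_cfc_mul_msqrt (X Y : Matrix n n ℂ) :
    relEntropy X Y =
      msqrt X * cfc (fun x => -Real.log x) (msqrt X * Y⁻¹ * msqrt X) * msqrt X := by
  rw [relEntropy, mlog, cfc_neg, mul_neg, neg_mul]

theorem Matrix.PosDef.cfc_inv_add_const {A : Matrix n n ℂ} (hA : A.PosDef) {l : ℝ} (hl : 0 ≤ l) :
    cfc (fun x : ℝ => (x + l)⁻¹) A = (A + algebraMap ℝ _ l)⁻¹ := by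
  rw [cfc_inv (fun x : ℝ => x + l) A fun x hx =>
      (add_pos_of_pos_of_nonneg (hA.isStrictlyPositive.spectrum_pos hx) hl).ne',
    cfc_add_const l (fun x => x) A, cfc_id' ℝ A, nonsing_inv_eq_ringInverse]

theorem smul_inv_add_inv_inv_eq_msqrt_mul_cfc_mul_msqrt {X Y : Matrix n n ℂ} (hX : X.PosDef)
    (hY : Y.PosDef) {l : ℝ} (hl : 0 ≤ l) :
    (l • X⁻¹ + Y⁻¹)⁻¹ =
      msqrt X * cfc (fun x => (x + l)⁻¹) (msqrt X * Y⁻¹ * msqrt X) * msqrt X := by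
  set S := msqrt X
  have hS : IsUnit S.det := (isUnit_iff_isUnit_det S).1 (isUnit_msqrt hX)
  have hsum : l • X⁻¹ + Y⁻¹ = S⁻¹ * (S * Y⁻¹ * S + algebraMap ℝ _ l) * S⁻¹ := by
    rw [Algebra.algebraMap_eq_smul_one, ← msqrt_mul_msqrt hX.posSemidef, Matrix.mul_inv_rev,
      mul_add, add_mul, mul_smul_comm, smul_mul_assoc, mul_one, ← mul_assoc, ← mul_assoc,
      nonsing_inv_mul _ hS, one_mul, mul_assoc, mul_nonsing_inv _ hS, mul_one, add_comm]
  rw [hsum, Matrix.mul_inv_rev, Matrix.mul_inv_rev, nonsing_inv_nonsing_inv _ hS, ← mul_assoc,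
    (posDef_msqrt_mul_inv_mul_msqrt hX hY).cfc_inv_add_const hl]

theorem exists_spectral_weights_relEntropy {X Y : Matrix n n ℂ} (hX : X.PosDef) (hY : Y.PosDef)
    (v : n → ℂ) :
    ∃ w d : n → ℝ, (∀ k, 0 < d k) ∧
      RCLike.re (star v ⬝ᵥ relEntropy X Y *ᵥ v) = ∑ k, -Real.log (d k) * w k ∧
      ∀ l, 0 ≤ l → relEntropyIntegrand X Y v l = ∑ k, ((d k + l)⁻¹ - (1 + l)⁻¹) * w k := by
  have hA := posDef_msqrt_mul_inv_mul_msqrt hX hY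
  have hquad (f : ℝ → ℝ) :
      RCLike.re (star v ⬝ᵥ (msqrt X * cfc f (msqrt X * Y⁻¹ * msqrt X) * msqrt X) *ᵥ v) =
        ∑ k, f (hA.1.eigenvalues k) *
          ‖(star (hA.1.eigenvectorUnitary : Matrix n n ℂ) *ᵥ msqrt X *ᵥ v) k‖ ^ 2 := by
    rw [← hA.1.re_dotProduct_cfc_mulVec, star_mulVec, ← dotProduct_mulVec,
      (isHermitian_msqrt X).eq, mulVec_mulVec, mulVec_mulVec]
  have hX1 := hquad fun _ => 1
  rw [cfc_const_one ℝ (msqrt X * Y⁻¹ * msqrt X), mul_one, msqrt_mul_msqrt hX.posSemidef] at hX1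
  refine ⟨fun k => ‖(star (hA.1.eigenvectorUnitary : Matrix n n ℂ) *ᵥ msqrt X *ᵥ v) k‖ ^ 2,
    _, hA.eigenvalues_pos, ?_, fun l hl => ?_⟩
  · rw [relEntropy_eq_msqrt_mul_cfc_mul_msqrt, hquad]
  · rw [relEntropyIntegrand, smul_inv_add_inv_inv_eq_msqrt_mul_cfc_mul_msqrt hX hY hl, hquad, hX1,
      Finset.sum_div, ← Finset.sum_sub_distrib]
    exact Finset.sum_congr rfl fun k _ => by ring

theorem integrableOn_relEntropyIntegrand {X Y : Matrix n n ℂ} (hX : X.PosDef) (hY : Y.PosDef)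
    (v : n → ℂ) : IntegrableOn (relEntropyIntegrand X Y v) (Ioi 0) := by
  obtain ⟨w, d, hd, -, hint⟩ := exists_spectral_weights_relEntropy hX hY v
  exact IntegrableOn.congr_fun (integrable_finsetSum _ fun k _ =>
    (integrableOn_inv_add_sub_inv_one_add (hd k)).mul_const (w k))
      (fun l hl => (hint l (le_of_lt hl)).symm) measurableSet_Ioi

theorem setIntegral_relEntropyIntegrand {X Y : Matrix n n ℂ} (hX : X.PosDef) (hY : Y.PosDef)
    (v : n → ℂ) :
    ∫ l in Ioi 0, relEntropyIntegrand X Y v l = RCLike.re (star v ⬝ᵥ relEntropy X Y *ᵥ v) := by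
  obtain ⟨w, d, hd, hG, hint⟩ := exists_spectral_weights_relEntropy hX hY v
  rw [setIntegral_congr_fun measurableSet_Ioi fun l hl => hint l (le_of_lt hl),
    integral_finsetSum _ fun k _ =>
      (integrableOn_inv_add_sub_inv_one_add (hd k)).mul_const (w k), hG]
  exact Finset.sum_congr rfl fun k _ => by
    rw [integral_mul_const, integral_inv_add_sub_inv_one_add (hd k)]

theorem concaveOn_relEntropyIntegrand (v : n → ℂ) {l : ℝ} (hl : 0 < l) :
    ConcaveOn ℝ ({X : Matrix n n ℂ | X.PosDef} ×ˢ {Y : Matrix n n ℂ | Y.PosDef})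
      fun p => relEntropyIntegrand p.1 p.2 v l := by
  have hpar := concaveOn_re_dotProduct_inv_add_inv_inv (n := n) (𝕜 := ℂ) v
  have hscale {X : Matrix n n ℂ} (hX : X.PosDef) : l • X⁻¹ = (l⁻¹ • X)⁻¹ :=
    (inv_eq_left_inv (by rw [smul_mul_smul_comm, mul_inv_cancel₀ hl.ne',
      nonsing_inv_mul _ hX.isUnit_det, one_smul])).symm
  refine ⟨hpar.1, fun p hp q hq a b ha hb hab => ?_⟩
  have hc := hpar.1 hp hq ha hb hab
  have h := hpar.2 (x := (l⁻¹ • p.1, p.2)) (y := (l⁻¹ • q.1, q.2))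
    ⟨hp.1.smul (inv_pos.2 hl), hp.2⟩ ⟨hq.1.smul (inv_pos.2 hl), hq.2⟩ ha hb hab
  simp only [relEntropyIntegrand, hscale hp.1, hscale hq.1, hscale hc.1]
  simp only [Prod.fst_add, Prod.snd_add, Prod.smul_fst, Prod.smul_snd, smul_comm _ l⁻¹,
    ← smul_add] at h ⊢
  simp only [add_mulVec, smul_mulVec, dotProduct_add, dotProduct_smul, map_add, RCLike.smul_re,
    smul_eq_mul] at h ⊢
  rw [add_div, mul_div_assoc, mul_div_assoc]
  linarith

theorem concaveOn_re_dotProduct_relEntropy (v : n → ℂ) :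
    ConcaveOn ℝ ({X : Matrix n n ℂ | X.PosDef} ×ˢ {Y : Matrix n n ℂ | Y.PosDef})
      fun p => RCLike.re (star v ⬝ᵥ relEntropy p.1 p.2 *ᵥ v) := by
  have hint : ConcaveOn ℝ ({X : Matrix n n ℂ | X.PosDef} ×ˢ {Y : Matrix n n ℂ | Y.PosDef})
      fun p => ∫ l in Ioi 0, relEntropyIntegrand p.1 p.2 v l :=
    concaveOn_integral (convex_setOf_posDef.prod convex_setOf_posDef)
      (ae_restrict_of_forall_mem measurableSet_Ioi fun _ hl =>
        concaveOn_relEntropyIntegrand v (mem_Ioi.1 hl))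
      fun p hp => integrableOn_relEntropyIntegrand hp.1 hp.2 v
  exact hint.congr fun p hp => setIntegral_relEntropyIntegrand (X := p.1) (Y := p.2) hp.1 hp.2 v

end RelEntropy

theorem stmt19 {n : Type*} [Fintype n] [DecidableEq n]
    (X₁ X₂ Y₁ Y₂ : Matrix n n ℂ) (hX₁ : X₁.PosDef) (hX₂ : X₂.PosDef)
    (hY₁ : Y₁.PosDef) (hY₂ : Y₂.PosDef) (t : ℝ) (ht : t ∈ Set.Icc (0 : ℝ) 1) :
    letI G : Matrix n n ℂ → Matrix n n ℂ → Matrix n n ℂ := fun X Y =>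
      -(msqrt X * mlog (msqrt X * Y⁻¹ * msqrt X) * msqrt X)
    (G ((1 - t) • X₁ + t • X₂) ((1 - t) • Y₁ + t • Y₂) -
      ((1 - t) • G X₁ Y₁ + t • G X₂ Y₂)).PosSemidef := by
  show (relEntropy ((1 - t) • X₁ + t • X₂) ((1 - t) • Y₁ + t • Y₂) -
    ((1 - t) • relEntropy X₁ Y₁ + t • relEntropy X₂ Y₂)).PosSemidef
  refine IsHermitian.posSemidef_of_re_dotProduct_mulVec_nonneg
    ((isHermitian_relEntropy _ _).sub (((isHermitian_relEntropy _ _).smul (.all _)).add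
      ((isHermitian_relEntropy _ _).smul (.all _)))) fun v => ?_
  have h := (concaveOn_re_dotProduct_relEntropy v).2 (x := (X₁, Y₁)) (y := (X₂, Y₂))
    ⟨hX₁, hY₁⟩ ⟨hX₂, hY₂⟩ (sub_nonneg.2 ht.2) ht.1 (sub_add_cancel 1 t)
  simp only [Prod.fst_add, Prod.snd_add, Prod.smul_fst, Prod.smul_snd, smul_eq_mul] at h
  simp only [sub_mulVec, add_mulVec, smul_mulVec, dotProduct_sub, dotProduct_add, dotProduct_smul,
    map_sub, map_add, RCLike.smul_re, sub_nonneg]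
  exact h
end
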